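/- arXiv:1607.03311 — 6 statements merged into one kernel-verified Lean document; each statement's English description precedes it below -/
import Mathlib

section
/- Let f ∈ C[0,1] and let Q be continuous on Δ = {(t,τ): 0 ≤ τ < t ≤ 1} with |Q(t,τ)| ≤ c(t-τ)^{-ν} for constants c > 0 and 0 < ν < 1. Then the Volterra integral equation of the second kind u(t) = ∫_0^t Q(t,τ) u(τ) dτ + f(t) has a unique solution u ∈ C[0,1]. -/
/-!
After the substitution `τ = t s` the integrand of `∫₀ᵗ Q(t,τ) u(τ) dτ` becomes
`t Q(t, t s) u(t s)`, which is dominated by `c ‖u‖ (1 - s)^(-ν)` uniformly in `t`; by dominated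
convergence the Picard map `u ↦ f + ∫₀ᵗ Q(t,τ) u(τ) dτ` sends `C[0,1]` to itself.
Comparing with the Gamma integral, `∫₀ᵗ (t-τ)^(-ν) e^(λτ) dτ ≤ Γ(1-ν) λ^(ν-1) e^(λt)`, so the
`n`-th iterate moves two functions apart by at most `qⁿ e^λ` times their distance, where
`q = c Γ(1-ν) λ^(ν-1) < 1` once `λ` is large. Some iterate is thus a contraction, and the Banach
fixed point theorem gives a unique solution.
-/

open Set MeasureTheory Filter Topology

theorem ContractingWith.existsUnique_isFixedPt_of_iterate {α : Type*} [MetricSpace α]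
    [Nonempty α] [CompleteSpace α] {f : α → α} {K : NNReal} {n : ℕ}
    (hf : ContractingWith K f^[n]) : ∃! x, Function.IsFixedPt f x :=
  ⟨_, hf.isFixedPt_fixedPoint_iterate, fun _ hx => hf.fixedPoint_unique (hx.iterate n)⟩

theorem aestronglyMeasurable_restrict_Ioc_of_continuousOn_Ioo {f : ℝ → ℝ} {a b : ℝ}
    (hf : ContinuousOn f (Ioo a b)) : AEStronglyMeasurable f (volume.restrict (Ioc a b)) := by
  rw [← Measure.restrict_congr_set Ioo_ae_eq_Ioc]
  exact hf.aestronglyMeasurable measurableSet_Ioo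

theorem intervalIntegrable_sub_rpow_neg {ν : ℝ} (hν : ν < 1) (t a b : ℝ) :
    IntervalIntegrable (fun τ => (t - τ) ^ (-ν)) volume a b := by
  simpa using ((intervalIntegral.intervalIntegrable_rpow' (r := -ν) (a := t - a) (b := t - b)
    (by linarith)).comp_sub_left t)

theorem integral_sub_rpow_neg_mul_exp_le {ν lam t : ℝ} (hν : ν < 1) (hlam : 0 < lam)
    (ht : 0 ≤ t) :
    ∫ τ in 0..t, (t - τ) ^ (-ν) * Real.exp (lam * τ)
      ≤ (1 / lam) ^ (1 - ν) * Real.Gamma (1 - ν) * Real.exp (lam * t) := by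
  have hsubst : ∫ τ in 0..t, (t - τ) ^ (-ν) * Real.exp (lam * τ)
      = Real.exp (lam * t) * ∫ s in 0..t, s ^ ((1 - ν) - 1) * Real.exp (-(lam * s)) := by
    have := intervalIntegral.integral_comp_sub_left
      (fun s => Real.exp (lam * t) * (s ^ ((1 - ν) - 1) * Real.exp (-(lam * s))))
      (a := 0) (b := t) t
    simp only [sub_self, sub_zero] at this
    rw [← intervalIntegral.integral_const_mul, ← this]
    refine intervalIntegral.integral_congr fun τ _ => ?_
    rw [mul_left_comm, ← Real.exp_add]
    ring_nf
  have hint : IntegrableOn (fun s => s ^ ((1 - ν) - 1) * Real.exp (-(lam * s))) (Ioi 0) := by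
    refine (integrableOn_rpow_mul_exp_neg_mul_rpow (s := (1 - ν) - 1) (p := 1)
      (by linarith) one_pos hlam).congr_fun
      (fun s _ => ?_) measurableSet_Ioi
    simp
  have hmono : ∫ s in 0..t, s ^ ((1 - ν) - 1) * Real.exp (-(lam * s))
      ≤ ∫ s in Ioi 0, s ^ ((1 - ν) - 1) * Real.exp (-(lam * s)) := by
    rw [intervalIntegral.integral_of_le ht]
    refine setIntegral_mono_set hint ?_ Ioc_subset_Ioi_self.eventuallyLE
    filter_upwards [ae_restrict_mem measurableSet_Ioi] with s hs
    have : (0:ℝ) < s := hs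
    positivity
  rw [hsubst, mul_comm, ← Real.integral_rpow_mul_exp_neg_mul_Ioi (by linarith) hlam]
  exact mul_le_mul_of_nonneg_right hmono (Real.exp_pos _).le

structure IsWeaklySingularKernel (Q : ℝ → ℝ → ℝ) (c ν : ℝ) : Prop where
  continuousOn : ContinuousOn (fun p : ℝ × ℝ => Q p.1 p.2)
    {p : ℝ × ℝ | 0 ≤ p.2 ∧ p.2 < p.1 ∧ p.1 ≤ 1}
  abs_le : ∀ t τ : ℝ, 0 ≤ τ → τ < t → t ≤ 1 → |Q t τ| ≤ c * (t - τ) ^ (-ν)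

noncomputable def volterra (Q : ℝ → ℝ → ℝ) (w : ℝ → ℝ) (t : ℝ) : ℝ :=
  ∫ τ in 0..t, Q t τ * w τ

theorem volterra_eq_integral_comp_mul (Q : ℝ → ℝ → ℝ) (w : ℝ → ℝ) (t : ℝ) :
    volterra Q w t = ∫ s in 0..1, t * (Q t (t * s) * w (t * s)) := by
  rw [intervalIntegral.integral_const_mul]
  simpa [volterra] using (intervalIntegral.smul_integral_comp_mul_left
    (fun τ => Q t τ * w τ) t (a := 0) (b := 1)).symm

namespace IsWeaklySingularKernel

variable {Q : ℝ → ℝ → ℝ} {c ν : ℝ}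

theorem nonneg (hQ : IsWeaklySingularKernel Q c ν) : 0 ≤ c := by
  simpa using (abs_nonneg _).trans (hQ.abs_le 1 0 le_rfl one_pos le_rfl)

theorem aestronglyMeasurable_mul (hQ : IsWeaklySingularKernel Q c ν) {w : ℝ → ℝ}
    (hw : Continuous w) {t : ℝ} (ht : t ≤ 1) :
    AEStronglyMeasurable (fun τ => Q t τ * w τ) (volume.restrict (Ioc 0 t)) := by
  refine aestronglyMeasurable_restrict_Ioc_of_continuousOn_Ioo (ContinuousOn.mul ?_ hw.continuousOn)
  exact hQ.continuousOn.comp (Continuous.prodMk_right t).continuousOn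
    fun τ hτ => ⟨hτ.1.le, hτ.2, ht⟩

theorem ae_abs_mul_le (hQ : IsWeaklySingularKernel Q c ν) {w g : ℝ → ℝ} {t : ℝ}
    (ht : t ≤ 1) (hw : ∀ τ ∈ Icc 0 t, |w τ| ≤ g τ) :
    ∀ᵐ τ, τ ∈ Ioc 0 t → |Q t τ * w τ| ≤ c * (t - τ) ^ (-ν) * g τ := by
  filter_upwards [Measure.ae_ne volume t] with τ hτt hτ
  rw [abs_mul]
  exact mul_le_mul (hQ.abs_le t τ hτ.1.le (lt_of_le_of_ne hτ.2 hτt) ht)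
    (hw τ (Ioc_subset_Icc_self hτ)) (abs_nonneg _)
    (mul_nonneg hQ.nonneg (Real.rpow_nonneg (by linarith [hτ.2]) _))

theorem intervalIntegrable_mul (hQ : IsWeaklySingularKernel Q c ν) (hν : ν < 1) {w : ℝ → ℝ}
    (hw : Continuous w) {t : ℝ} (ht₀ : 0 ≤ t) (ht₁ : t ≤ 1) :
    IntervalIntegrable (fun τ => Q t τ * w τ) volume 0 t := by
  obtain ⟨M, hM⟩ := isCompact_Icc.exists_bound_of_continuousOn (hw.continuousOn (s := Icc 0 t))
  refine (((intervalIntegrable_sub_rpow_neg hν t 0 t).const_mul c).mul_const M).mono_fun' ?_ ?_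
  · rw [uIoc_of_le ht₀]
    exact hQ.aestronglyMeasurable_mul hw ht₁
  · rw [uIoc_of_le ht₀, EventuallyLE, ae_restrict_iff' measurableSet_Ioc]
    exact hQ.ae_abs_mul_le ht₁ hM

theorem volterra_sub (hQ : IsWeaklySingularKernel Q c ν) (hν : ν < 1) {w₁ w₂ : ℝ → ℝ}
    (hw₁ : Continuous w₁) (hw₂ : Continuous w₂) {t : ℝ} (ht₀ : 0 ≤ t) (ht₁ : t ≤ 1) :
    volterra Q (w₁ - w₂) t = volterra Q w₁ t - volterra Q w₂ t := by
  simp only [volterra, Pi.sub_apply, mul_sub]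
  exact intervalIntegral.integral_sub (hQ.intervalIntegrable_mul hν hw₁ ht₀ ht₁)
    (hQ.intervalIntegrable_mul hν hw₂ ht₀ ht₁)

theorem abs_volterra_le (hQ : IsWeaklySingularKernel Q c ν) (hν : ν < 1) {w : ℝ → ℝ}
    {B lam t : ℝ} (hlam : 0 < lam) (ht₀ : 0 ≤ t) (ht₁ : t ≤ 1)
    (hw : ∀ s ∈ Icc 0 t, |w s| ≤ B * Real.exp (lam * s)) :
    |volterra Q w t|
      ≤ c * ((1 / lam) ^ (1 - ν) * Real.Gamma (1 - ν)) * B * Real.exp (lam * t) := by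
  have hB : 0 ≤ B := by
    simpa using (abs_nonneg _).trans (hw 0 (left_mem_Icc.2 ht₀))
  have hbound : IntervalIntegrable (fun τ => c * (t - τ) ^ (-ν) * (B * Real.exp (lam * τ)))
      volume 0 t :=
    ((intervalIntegrable_sub_rpow_neg hν t 0 t).const_mul c).mul_continuousOn
      (by fun_prop : Continuous fun τ => B * Real.exp (lam * τ)).continuousOn
  rw [← Real.norm_eq_abs, volterra]
  refine (intervalIntegral.norm_integral_le_of_norm_le ht₀ (hQ.ae_abs_mul_le ht₁ hw)
    hbound).trans ?_
  calc ∫ τ in 0..t, c * (t - τ) ^ (-ν) * (B * Real.exp (lam * τ))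
      = c * B * ∫ τ in 0..t, (t - τ) ^ (-ν) * Real.exp (lam * τ) := by
        rw [← intervalIntegral.integral_const_mul]
        exact intervalIntegral.integral_congr fun τ _ => by ring
    _ ≤ c * B * ((1 / lam) ^ (1 - ν) * Real.Gamma (1 - ν) * Real.exp (lam * t)) :=
        mul_le_mul_of_nonneg_left (integral_sub_rpow_neg_mul_exp_le hν hlam ht₀)
          (mul_nonneg hQ.nonneg hB)
    _ = _ := by ring

theorem abs_mul_comp_mul_le (hQ : IsWeaklySingularKernel Q c ν) (hν : ν < 1) {w : ℝ → ℝ}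
    {M : ℝ} (hM : ∀ x ∈ Icc (0:ℝ) 1, |w x| ≤ M) {t s : ℝ} (ht : t ∈ Icc (0:ℝ) 1)
    (hs : s ∈ Ico (0:ℝ) 1) :
    |t * (Q t (t * s) * w (t * s))| ≤ c * M * (1 - s) ^ (-ν) * t ^ (1 - ν) := by
  rcases ht.1.eq_or_lt with rfl | htpos
  · simp [Real.zero_rpow (by linarith : 1 - ν ≠ 0)]
  have hts : t * s ∈ Icc (0:ℝ) 1 := ⟨mul_nonneg ht.1 hs.1, mul_le_one₀ ht.2 hs.1 hs.2.le⟩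
  have hQts : |Q t (t * s)| ≤ c * (t - t * s) ^ (-ν) :=
    hQ.abs_le t (t * s) hts.1 (mul_lt_of_lt_one_right htpos hs.2) ht.2
  have hsing : t * (t - t * s) ^ (-ν) = (1 - s) ^ (-ν) * t ^ (1 - ν) := by
    rw [show t - t * s = t * (1 - s) by ring, Real.mul_rpow htpos.le (by linarith [hs.2]),
      Real.rpow_sub htpos, Real.rpow_one, Real.rpow_neg htpos.le]
    field_simp
  rw [abs_mul, abs_mul, abs_of_pos htpos]
  calc t * (|Q t (t * s)| * |w (t * s)|) ≤ t * (c * (t - t * s) ^ (-ν) * M) := by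
        gcongr
        · exact mul_nonneg hQ.nonneg (Real.rpow_nonneg (by nlinarith [hs.2]) _)
        · exact hM _ hts
    _ = c * M * (t * (t - t * s) ^ (-ν)) := by ring
    _ = c * M * (1 - s) ^ (-ν) * t ^ (1 - ν) := by rw [hsing]; ring


theorem continuousOn_comp_mul (hQ : IsWeaklySingularKernel Q c ν) :
    ContinuousOn (fun p : ℝ × ℝ => Q p.1 (p.1 * p.2)) (Ioc 0 1 ×ˢ Ico 0 1) :=
  hQ.continuousOn.comp
    (by fun_prop : Continuous fun p : ℝ × ℝ => (p.1, p.1 * p.2)).continuousOn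
    fun _ ⟨ht, hs⟩ => ⟨mul_nonneg ht.1.le hs.1, mul_lt_of_lt_one_right ht.1 hs.2, ht.2⟩

theorem continuousWithinAt_mul_comp_mul (hQ : IsWeaklySingularKernel Q c ν) (hν : ν < 1)
    {w : ℝ → ℝ} (hw : Continuous w) {s : ℝ} (hs : s ∈ Ico (0:ℝ) 1) {t₀ : ℝ}
    (ht₀ : t₀ ∈ Icc (0:ℝ) 1) :
    ContinuousWithinAt (fun t => t * (Q t (t * s) * w (t * s))) (Icc 0 1) t₀ := by
  rcases ht₀.1.eq_or_lt with rfl | ht₀pos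
  · -- the factor `t ^ (1 - ν)` absorbs the singularity of `Q` at the corner `(0, 0)`
    obtain ⟨M, hM⟩ :=
      isCompact_Icc.exists_bound_of_continuousOn (hw.continuousOn (s := Icc 0 1))
    have hlim : Tendsto (fun t : ℝ => c * M * (1 - s) ^ (-ν) * t ^ (1 - ν)) (𝓝[Icc 0 1] 0)
        (𝓝 0) := by
      have := ((Real.continuousAt_rpow_const 0 (1 - ν) (Or.inr (by linarith))).const_mul
        (c * M * (1 - s) ^ (-ν))).tendsto
      rw [Real.zero_rpow (by linarith), mul_zero] at this
      exact this.mono_left nhdsWithin_le_nhds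
    rw [ContinuousWithinAt, zero_mul]
    refine squeeze_zero_norm' ?_ hlim
    filter_upwards [self_mem_nhdsWithin] with t ht
    exact hQ.abs_mul_comp_mul_le hν hM ht hs
  · have hQs : ContinuousWithinAt (fun t => Q t (t * s)) (Ioc 0 1) t₀ :=
      (hQ.continuousOn_comp_mul.comp (Continuous.prodMk_left s).continuousOn
        fun t ht => ⟨ht, hs⟩) t₀ ⟨ht₀pos, ht₀.2⟩
    have hnhds : Ioc 0 1 ∈ 𝓝[Icc 0 1] t₀ :=
      mem_of_superset (inter_mem_nhdsWithin _ (Ioi_mem_nhds ht₀pos))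
        fun t ht => ⟨ht.2, ht.1.2⟩
    exact continuousWithinAt_id.mul ((hQs.mono_of_mem_nhdsWithin hnhds).mul
      (hw.comp (continuous_mul_const s)).continuousWithinAt)

theorem continuousOn_volterra (hQ : IsWeaklySingularKernel Q c ν) (hν : ν < 1) {w : ℝ → ℝ}
    (hw : Continuous w) : ContinuousOn (volterra Q w) (Icc 0 1) := by
  obtain ⟨M, hM⟩ := isCompact_Icc.exists_bound_of_continuousOn (hw.continuousOn (s := Icc 0 1))
  intro t₀ ht₀
  rw [funext (volterra_eq_integral_comp_mul Q w)]
  refine intervalIntegral.continuousWithinAt_of_dominated_interval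
    (bound := fun s => c * M * (1 - s) ^ (-ν)) ?_ ?_
    ((intervalIntegrable_sub_rpow_neg hν 1 0 1).const_mul _) ?_
  · filter_upwards [self_mem_nhdsWithin] with t ht
    rw [uIoc_of_le zero_le_one]
    refine aestronglyMeasurable_restrict_Ioc_of_continuousOn_Ioo ?_
    rcases ht.1.eq_or_lt with rfl | htpos
    · simpa using continuousOn_const
    · exact continuousOn_const.mul ((hQ.continuousOn_comp_mul.comp
        (Continuous.prodMk_right t).continuousOn
        fun s hs => ⟨⟨htpos, ht.2⟩, Ioo_subset_Ico_self hs⟩).mul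
        (hw.comp (continuous_const_mul t)).continuousOn)
  · filter_upwards [self_mem_nhdsWithin] with t ht
    filter_upwards [Measure.ae_ne volume 1] with s hs1 hs
    rw [uIoc_of_le zero_le_one] at hs
    have hs' : s ∈ Ico (0:ℝ) 1 := ⟨hs.1.le, lt_of_le_of_ne hs.2 hs1⟩
    refine (hQ.abs_mul_comp_mul_le hν hM ht hs').trans (mul_le_of_le_one_right ?_ ?_)
    · exact mul_nonneg
        (mul_nonneg hQ.nonneg ((abs_nonneg _).trans (hM 0 ⟨le_rfl, zero_le_one⟩)))
        (Real.rpow_nonneg (by linarith [hs'.2]) _)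
    · exact Real.rpow_le_one ht.1 ht.2 (by linarith)
  · filter_upwards [Measure.ae_ne volume 1] with s hs1 hs
    rw [uIoc_of_le zero_le_one] at hs
    exact hQ.continuousWithinAt_mul_comp_mul hν hw ⟨hs.1.le, lt_of_le_of_ne hs.2 hs1⟩ ht₀

noncomputable def picard (hQ : IsWeaklySingularKernel Q c ν) (hν : ν < 1)
    (f u : C(Icc (0:ℝ) 1, ℝ)) : C(Icc (0:ℝ) 1, ℝ) where
  toFun t := volterra Q (IccExtend zero_le_one u) t + f t
  continuous_toFun :=
    (hQ.continuousOn_volterra hν (continuous_IccExtend_iff.2 u.continuous)).domRestrict.add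
      f.continuous

theorem picard_apply (hQ : IsWeaklySingularKernel Q c ν) (hν : ν < 1)
    (f u : C(Icc (0:ℝ) 1, ℝ)) (t : Icc (0:ℝ) 1) :
    hQ.picard hν f u t = volterra Q (IccExtend zero_le_one u) t + f t :=
  rfl

theorem picard_apply_sub_picard_apply (hQ : IsWeaklySingularKernel Q c ν) (hν : ν < 1)
    (f u v : C(Icc (0:ℝ) 1, ℝ)) (t : Icc (0:ℝ) 1) :
    hQ.picard hν f u t - hQ.picard hν f v t
      = volterra Q (IccExtend zero_le_one ⇑(u - v)) t := by
  rw [show IccExtend zero_le_one ⇑(u - v) = IccExtend zero_le_one u - IccExtend zero_le_one v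
    from rfl, hQ.volterra_sub hν (continuous_IccExtend_iff.2 u.continuous)
    (continuous_IccExtend_iff.2 v.continuous) t.2.1 t.2.2, picard_apply, picard_apply]
  ring

theorem abs_picard_iterate_sub_le (hQ : IsWeaklySingularKernel Q c ν) (hν : ν < 1)
    (f u v : C(Icc (0:ℝ) 1, ℝ)) {lam : ℝ} (hlam : 0 < lam) (n : ℕ) (t : Icc (0:ℝ) 1) :
    |(hQ.picard hν f)^[n] u t - (hQ.picard hν f)^[n] v t|
      ≤ (c * ((1 / lam) ^ (1 - ν) * Real.Gamma (1 - ν))) ^ n * Real.exp (lam * t)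
        * dist u v := by
  set q := c * ((1 / lam) ^ (1 - ν) * Real.Gamma (1 - ν))
  induction n generalizing t with
  | zero =>
    rw [Function.iterate_zero_apply, Function.iterate_zero_apply, pow_zero, one_mul,
      ← Real.dist_eq]
    exact (ContinuousMap.dist_apply_le_dist t).trans
      (le_mul_of_one_le_left dist_nonneg (Real.one_le_exp (mul_nonneg hlam.le t.2.1)))
  | succ k ih =>
    rw [Function.iterate_succ_apply', Function.iterate_succ_apply',
      picard_apply_sub_picard_apply]
    refine (hQ.abs_volterra_le hν (B := q ^ k * dist u v) hlam t.2.1 t.2.2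
      fun s hs => ?_).trans_eq (by ring)
    have hs' : s ∈ Icc (0:ℝ) 1 := ⟨hs.1, hs.2.trans t.2.2⟩
    rw [IccExtend_of_mem _ _ hs', ContinuousMap.sub_apply]
    exact (ih ⟨s, hs'⟩).trans_eq (by ring)

theorem exists_contractingWith_iterate_picard (hQ : IsWeaklySingularKernel Q c ν) (hν : ν < 1)
    (f : C(Icc (0:ℝ) 1, ℝ)) :
    ∃ (K : NNReal) (n : ℕ), ContractingWith K (hQ.picard hν f)^[n] := by
  set rate : ℝ → ℝ := fun lam => c * ((1 / lam) ^ (1 - ν) * Real.Gamma (1 - ν))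
  have hrate : Tendsto rate atTop (𝓝 0) := by
    have h := ((Real.continuousAt_rpow_const 0 (1 - ν) (Or.inr (by linarith))).tendsto.comp
      tendsto_inv_atTop_zero).mul_const (Real.Gamma (1 - ν)) |>.const_mul c
    rw [Real.zero_rpow (by linarith), zero_mul, mul_zero] at h
    simpa only [rate, one_div, Function.comp_def] using h
  obtain ⟨lam, hlt, hlam⟩ :=
    ((hrate.eventually (gt_mem_nhds one_pos)).and (eventually_gt_atTop 0)).exists
  have hrate0 : 0 ≤ rate lam := mul_nonneg hQ.nonneg
    (mul_nonneg (by positivity) (Real.Gamma_pos_of_pos (by linarith)).le)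
  obtain ⟨n, hn⟩ := exists_pow_lt_of_lt_one (Real.exp_pos (-lam)) hlt
  have hK₀ : 0 ≤ rate lam ^ n * Real.exp lam := by positivity
  refine ⟨(rate lam ^ n * Real.exp lam).toNNReal, n, ?_, ?_⟩
  · rw [Real.toNNReal_lt_one]
    calc rate lam ^ n * Real.exp lam < Real.exp (-lam) * Real.exp lam :=
          mul_lt_mul_of_pos_right hn (Real.exp_pos lam)
      _ = 1 := by rw [← Real.exp_add, neg_add_cancel, Real.exp_zero]
  · refine LipschitzWith.of_dist_le_mul fun u v => ?_
    rw [Real.coe_toNNReal _ hK₀, ContinuousMap.dist_le (by positivity)]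
    intro t
    refine (Real.dist_eq _ _ ▸ hQ.abs_picard_iterate_sub_le hν f u v hlam n t).trans ?_
    gcongr
    exact mul_le_of_le_one_right hlam.le t.2.2

end IsWeaklySingularKernel

/-- The weakly singular Volterra integral equation of the second
kind u(t) = ∫_0^t Q(t,τ)u(τ)dτ + f(t) has a unique continuous solution on [0,1]. -/
theorem volterra_unique_solution (Q : ℝ → ℝ → ℝ) (f : C(Icc (0:ℝ) 1, ℝ))
    (c ν : ℝ) (hν1 : ν < 1)
    (hQcont : ContinuousOn (fun p : ℝ × ℝ => Q p.1 p.2)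
      {p : ℝ × ℝ | 0 ≤ p.2 ∧ p.2 < p.1 ∧ p.1 ≤ 1})
    (hQbound : ∀ t τ : ℝ, 0 ≤ τ → τ < t → t ≤ 1 → |Q t τ| ≤ c * (t - τ) ^ (-ν)) :
    ∃! u : C(Icc (0:ℝ) 1, ℝ), ∀ t : Icc (0:ℝ) 1,
      u t = (∫ τ in (0:ℝ)..(t:ℝ), Q t τ * u (projIcc 0 1 (by norm_num) τ)) + f t := by
  have hQ : IsWeaklySingularKernel Q c ν := ⟨hQcont, hQbound⟩
  obtain ⟨K, n, hK⟩ := hQ.exists_contractingWith_iterate_picard hν1 f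
  have : Nonempty C(Icc (0:ℝ) 1, ℝ) := ⟨f⟩
  refine (existsUnique_congr fun u => ?_).1 hK.existsUnique_isFixedPt_of_iterate
  rw [Function.IsFixedPt, ContinuousMap.ext_iff]
  exact forall_congr' fun t => eq_comm
end

section
/- Let T, ε, M > 0, 0 < q < 1, ν = 1-q, and let δ : [0,T] → ℝ be continuous with |δ(t)| ≤ ε + (M/Γ(q)) ∫_0^t (t-τ)^{-ν} |δ(τ)| dτ for all t ∈ [0,T]. Then |δ(t)| ≤ ε E_q(M t^q) for all t ∈ [0,T], where E_q is the Mittag-Leffler function. -/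
/-- The two-parameter Mittag-Leffler function (real argument). -/
noncomputable def ML (q β z : ℝ) : ℝ := ∑' k : ℕ, z ^ k / Real.Gamma (q * k + β)

/-!
With the Riemann–Liouville integral `I^q f (t) = Γ(q)⁻¹ ∫₀ᵗ (t - τ)^(q-1) f(τ) dτ` the hypothesis
reads `u ≤ ε + M I^q u` for `u = |δ|`. The operator `I^q` is monotone, and by the Beta integral
`M I^q` sends `M^k t^(qk) / Γ(qk+1)` to the next term of the same shape. Iterating `n` times
therefore gives `u ≤ ε ∑_{k<n} (M t^q)^k / Γ(qk+1) + C (M t^q)^n / Γ(qn+1)`, where `C` bounds `u`.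
The Mittag-Leffler series converges by the ratio test, the ratio `Γ(x)/Γ(x+q) ≲ x^(-q)` coming
from the log-convexity of `Γ`; so the remainder vanishes and the partial sums tend to
`ε E_q(M t^q)`.
-/

open Real Set Filter MeasureTheory Topology

theorem integral_rpow_mul_sub_rpow {s t a : ℝ} (hs : 0 < s) (ht : 0 < t) (ha : 0 < a) :
    ∫ x in (0:ℝ)..a, x ^ (s - 1) * (a - x) ^ (t - 1) =
      Gamma s * Gamma t / Gamma (s + t) * a ^ (s + t - 1) := by
  have hB : Complex.betaIntegral s t = ((Gamma s * Gamma t / Gamma (s + t) : ℝ) : ℂ) := by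
    have hG : ((Gamma (s + t) : ℝ) : ℂ) ≠ 0 := by
      exact_mod_cast (Gamma_pos_of_pos (add_pos hs ht)).ne'
    have h := Complex.Gamma_mul_Gamma_eq_betaIntegral (s := s) (t := t) (by simpa) (by simpa)
    rw [← Complex.ofReal_add, Complex.Gamma_ofReal, Complex.Gamma_ofReal,
      Complex.Gamma_ofReal] at h
    rw [Complex.ofReal_div, eq_div_iff hG, mul_comm, ← h, Complex.ofReal_mul]
  have hint : ((∫ x in (0:ℝ)..a, x ^ (s - 1) * (a - x) ^ (t - 1) : ℝ) : ℂ) =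
      ∫ x in (0:ℝ)..a, (x : ℂ) ^ ((s : ℂ) - 1) * ((a : ℂ) - x) ^ ((t : ℂ) - 1) := by
    rw [← intervalIntegral.integral_ofReal]
    refine intervalIntegral.integral_congr fun x hx => ?_
    rw [uIcc_of_le ha.le] at hx
    push_cast [Complex.ofReal_cpow hx.1, Complex.ofReal_cpow (sub_nonneg.2 hx.2)]
    rfl
  have h := Complex.betaIntegral_scaled s t ha
  rw [← hint, hB, ← Complex.ofReal_one, ← Complex.ofReal_add, ← Complex.ofReal_sub,
    ← Complex.ofReal_cpow ha.le, ← Complex.ofReal_mul] at h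
  rw [Complex.ofReal_injective h, mul_comm]

noncomputable def riemannLiouville (q : ℝ) (f : ℝ → ℝ) (t : ℝ) : ℝ :=
  (Gamma q)⁻¹ * ∫ τ in (0:ℝ)..t, (t - τ) ^ (q - 1) * f τ

namespace riemannLiouville

variable {q t : ℝ}

theorem intervalIntegrable {f : ℝ → ℝ} (hq : 0 < q) (ht : 0 ≤ t)
    (hf : ContinuousOn f (Icc 0 t)) :
    IntervalIntegrable (fun τ => (t - τ) ^ (q - 1) * f τ) volume 0 t := by
  have hker : IntervalIntegrable (fun τ => (t - τ) ^ (q - 1)) volume 0 t := by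
    have hpow : IntervalIntegrable (fun x : ℝ => x ^ (q - 1)) volume 0 t :=
      intervalIntegral.intervalIntegrable_rpow' (by linarith)
    simpa using (hpow.comp_sub_left t).symm
  exact hker.mul_continuousOn (by rwa [uIcc_of_le ht])

theorem mono {f g : ℝ → ℝ} (hq : 0 < q) (ht : 0 ≤ t) (hf : ContinuousOn f (Icc 0 t))
    (hg : ContinuousOn g (Icc 0 t)) (hfg : ∀ τ ∈ Icc 0 t, f τ ≤ g τ) :
    riemannLiouville q f t ≤ riemannLiouville q g t := by
  refine mul_le_mul_of_nonneg_left ?_ (inv_nonneg.2 (Gamma_pos_of_pos hq).le)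
  refine intervalIntegral.integral_mono_on ht (intervalIntegrable hq ht hf)
    (intervalIntegrable hq ht hg) fun τ hτ => ?_
  exact mul_le_mul_of_nonneg_left (hfg τ hτ) (rpow_nonneg (sub_nonneg.2 hτ.2) _)

theorem const_mul (c : ℝ) (f : ℝ → ℝ) :
    riemannLiouville q (fun τ => c * f τ) t = c * riemannLiouville q f t := by
  simp only [riemannLiouville, mul_left_comm _ c, intervalIntegral.integral_const_mul]

theorem add {f g : ℝ → ℝ} (hq : 0 < q) (ht : 0 ≤ t) (hf : ContinuousOn f (Icc 0 t))
    (hg : ContinuousOn g (Icc 0 t)) :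
    riemannLiouville q (fun τ => f τ + g τ) t =
      riemannLiouville q f t + riemannLiouville q g t := by
  simp only [riemannLiouville, mul_add]
  rw [intervalIntegral.integral_add (intervalIntegrable hq ht hf) (intervalIntegrable hq ht hg),
    mul_add]

theorem finset_sum {ι : Type*} (s : Finset ι) {f : ι → ℝ → ℝ} (hq : 0 < q) (ht : 0 ≤ t)
    (hf : ∀ i ∈ s, ContinuousOn (f i) (Icc 0 t)) :
    riemannLiouville q (fun τ => ∑ i ∈ s, f i τ) t = ∑ i ∈ s, riemannLiouville q (f i) t := by
  simp only [riemannLiouville, Finset.mul_sum]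
  rw [intervalIntegral.integral_finsetSum fun i hi => intervalIntegrable hq ht (hf i hi),
    Finset.mul_sum]

theorem rpow {p : ℝ} (hq : 0 < q) (hp : -1 < p) (ht : 0 < t) :
    riemannLiouville q (fun τ => τ ^ p) t = Gamma (p + 1) / Gamma (p + 1 + q) * t ^ (p + q) := by
  have hbeta := integral_rpow_mul_sub_rpow (s := p + 1) (by linarith) hq ht
  simp only [add_sub_cancel_right, show p + 1 + q - 1 = p + q by ring] at hbeta
  rw [riemannLiouville, intervalIntegral.integral_congr fun τ _ => mul_comm _ _, hbeta]
  field_simp [(Gamma_pos_of_pos hq).ne']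

end riemannLiouville

theorem Gamma_add_one_le_rpow_mul_Gamma_add {x q : ℝ} (hx : 0 < x + q) (hq0 : 0 < q)
    (hq1 : q < 1) : Gamma (x + 1) ≤ (x + q) ^ (1 - q) * Gamma (x + q) := by
  have h := Gamma_mul_add_mul_le_rpow_Gamma_mul_rpow_Gamma hx (by linarith : 0 < x + q + 1)
    hq0 (sub_pos.2 hq1) (add_sub_cancel q 1)
  rwa [show q * (x + q) + (1 - q) * (x + q + 1) = x + 1 by ring, Gamma_add_one hx.ne',
    mul_rpow hx.le (Gamma_pos_of_pos hx).le, ← mul_assoc, mul_comm (_ ^ q), mul_assoc,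
    ← rpow_add (Gamma_pos_of_pos hx), add_sub_cancel, rpow_one] at h

theorem Gamma_le_two_mul_rpow_neg_mul_Gamma_add {x q : ℝ} (hx : 1 ≤ x) (hq0 : 0 < q)
    (hq1 : q < 1) : Gamma x ≤ 2 * (x + q) ^ (-q) * Gamma (x + q) := by
  have hx0 : 0 < x := by linarith
  have hxq : 0 < x + q := by linarith
  have hW := Gamma_add_one_le_rpow_mul_Gamma_add hxq hq0 hq1
  rw [Gamma_add_one hx0.ne', show 1 - q = 1 + -q by ring, rpow_add hxq, rpow_one] at hW
  have hGq := (Gamma_pos_of_pos hxq).le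
  have hpow := (rpow_pos_of_pos hxq (-q)).le
  refine le_of_mul_le_mul_left ?_ hx0
  calc x * Gamma x ≤ (x + q) * (x + q) ^ (-q) * Gamma (x + q) := hW
    _ ≤ x * (2 * (x + q) ^ (-q) * Gamma (x + q)) := by
      nlinarith [mul_nonneg hpow hGq]

theorem summable_pow_div_Gamma {q : ℝ} (hq0 : 0 < q) (hq1 : q < 1) (z : ℝ) :
    Summable (fun k : ℕ => z ^ k / Gamma (q * k + 1)) := by
  have hx (k : ℕ) : 1 ≤ q * k + 1 := le_add_of_nonneg_left (mul_nonneg hq0.le k.cast_nonneg)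
  have hdecay : Tendsto (fun k : ℕ => 2 * |z| * (q * k + 1 + q) ^ (-q)) atTop (𝓝 0) := by
    have hlin : Tendsto (fun k : ℕ => q * k + 1 + q) atTop atTop :=
      tendsto_atTop_add_const_right _ _ <| tendsto_atTop_add_const_right _ _ <|
        (tendsto_natCast_atTop_atTop (R := ℝ)).const_mul_atTop hq0
    simpa using ((tendsto_rpow_neg_atTop hq0).comp hlin).const_mul (2 * |z|)
  refine summable_of_ratio_norm_eventually_le (r := 1 / 2) (by norm_num) ?_
  filter_upwards [hdecay.eventually_le_const (by norm_num : (0:ℝ) < 1 / 2)] with k hk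
  have hGk := Gamma_pos_of_pos (by linarith [hx k] : 0 < q * k + 1)
  have hGk1 := Gamma_pos_of_pos (by linarith [hx k] : 0 < q * k + 1 + q)
  have hratio : |z| * Gamma (q * k + 1) ≤ 1 / 2 * Gamma (q * k + 1 + q) :=
    calc |z| * Gamma (q * k + 1)
        ≤ |z| * (2 * (q * k + 1 + q) ^ (-q) * Gamma (q * k + 1 + q)) :=
          mul_le_mul_of_nonneg_left (Gamma_le_two_mul_rpow_neg_mul_Gamma_add (hx k) hq0 hq1)
            (abs_nonneg z)
      _ = 2 * |z| * (q * k + 1 + q) ^ (-q) * Gamma (q * k + 1 + q) := by ring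
      _ ≤ 1 / 2 * Gamma (q * k + 1 + q) := mul_le_mul_of_nonneg_right hk hGk1.le
  rw [show q * ((k + 1 : ℕ) : ℝ) + 1 = q * k + 1 + q by push_cast; ring]
  simp only [norm_div, norm_pow, Real.norm_eq_abs, abs_of_pos hGk, abs_of_pos hGk1]
  rw [div_le_iff₀ hGk1, pow_succ]
  calc |z| ^ k * |z| = |z| ^ k / Gamma (q * k + 1) * (|z| * Gamma (q * k + 1)) := by
        field_simp
    _ ≤ |z| ^ k / Gamma (q * k + 1) * (1 / 2 * Gamma (q * k + 1 + q)) := by gcongr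
    _ = 1 / 2 * (|z| ^ k / Gamma (q * k + 1)) * Gamma (q * k + 1 + q) := by ring

noncomputable def mittagLefflerTerm (q M : ℝ) (k : ℕ) (t : ℝ) : ℝ :=
  M ^ k * t ^ (q * k) / Gamma (q * k + 1)

namespace mittagLefflerTerm

variable {q : ℝ} (M : ℝ)

@[simp]
theorem zero (t : ℝ) : mittagLefflerTerm q M 0 t = 1 := by
  simp [mittagLefflerTerm]

theorem continuous (hq : 0 ≤ q) (k : ℕ) : Continuous (mittagLefflerTerm q M k) :=
  (continuous_const.mul (continuous_id.rpow_const fun _ => Or.inr (by positivity))).div_const _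

theorem eq_pow_div_Gamma {t : ℝ} (ht : 0 ≤ t) (k : ℕ) :
    mittagLefflerTerm q M k t = (M * t ^ q) ^ k / Gamma (q * k + 1) := by
  rw [mittagLefflerTerm, mul_pow, ← rpow_natCast (t ^ q), ← rpow_mul ht]

theorem mul_riemannLiouville (hq : 0 < q) {t : ℝ} (ht : 0 ≤ t) (k : ℕ) :
    M * riemannLiouville q (mittagLefflerTerm q M k) t = mittagLefflerTerm q M (k + 1) t := by
  have hqk : 0 ≤ q * k := mul_nonneg hq.le k.cast_nonneg
  rcases ht.eq_or_lt with rfl | ht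
  · have hpos : q * ((k : ℝ) + 1) ≠ 0 := (mul_pos hq (by positivity)).ne'
    simp [riemannLiouville, mittagLefflerTerm, zero_rpow hpos]
  have hterm : mittagLefflerTerm q M k = fun τ => M ^ k / Gamma (q * k + 1) * τ ^ (q * k) := by
    funext τ
    rw [mittagLefflerTerm]
    ring
  rw [hterm, riemannLiouville.const_mul, riemannLiouville.rpow hq (by linarith) ht,
    mittagLefflerTerm]
  push_cast
  rw [show q * (k + 1) + 1 = q * k + 1 + q by ring, show q * (k + 1) = q * k + q by ring]
  field_simp [(Gamma_pos_of_pos (by linarith : 0 < q * k + 1)).ne']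
  ring

end mittagLefflerTerm

theorem le_gronwall_iterate {u : ℝ → ℝ} {T ε M C q : ℝ} (hq : 0 < q) (hM : 0 ≤ M)
    (hu : ContinuousOn u (Icc 0 T)) (hC : ∀ t ∈ Icc 0 T, u t ≤ C)
    (hineq : ∀ t ∈ Icc 0 T, u t ≤ ε + M * riemannLiouville q u t) (n : ℕ) :
    ∀ t ∈ Icc 0 T, u t ≤
      ε * ∑ k ∈ Finset.range n, mittagLefflerTerm q M k t + C * mittagLefflerTerm q M n t := by
  induction n with
  | zero => simpa using hC
  | succ n ih =>
    intro t ht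
    have hsub : Icc 0 t ⊆ Icc 0 T := Icc_subset_Icc_right ht.2
    have hcont (k : ℕ) : ContinuousOn (mittagLefflerTerm q M k) (Icc 0 t) :=
      (mittagLefflerTerm.continuous M hq.le k).continuousOn
    have hS : ContinuousOn (fun τ => ε * ∑ k ∈ Finset.range n, mittagLefflerTerm q M k τ)
        (Icc 0 t) :=
      continuousOn_const.mul (continuousOn_finsetSum _ fun k _ => hcont k)
    have hR : ContinuousOn (fun τ => C * mittagLefflerTerm q M n τ) (Icc 0 t) :=
      continuousOn_const.mul (hcont n)
    have hstep : M * riemannLiouville q u t ≤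
        ε * ∑ k ∈ Finset.range n, mittagLefflerTerm q M (k + 1) t +
          C * mittagLefflerTerm q M (n + 1) t := by
      calc M * riemannLiouville q u t
          ≤ M * riemannLiouville q (fun τ => ε * ∑ k ∈ Finset.range n, mittagLefflerTerm q M k τ +
              C * mittagLefflerTerm q M n τ) t :=
            mul_le_mul_of_nonneg_left (riemannLiouville.mono hq ht.1 (hu.mono hsub)
              (hS.add hR) fun τ hτ => ih τ (hsub hτ)) hM
        _ = _ := by
          rw [riemannLiouville.add hq ht.1 hS hR, riemannLiouville.const_mul,
            riemannLiouville.const_mul, riemannLiouville.finset_sum _ hq ht.1 fun k _ => hcont k]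
          simp only [← mittagLefflerTerm.mul_riemannLiouville M hq ht.1]
          rw [← Finset.mul_sum]
          ring
    calc u t ≤ ε + M * riemannLiouville q u t := hineq t ht
      _ ≤ _ := by
        rw [Finset.sum_range_succ', mittagLefflerTerm.zero]
        linarith

theorem tendsto_gronwall_iterate {q : ℝ} (hq0 : 0 < q) (hq1 : q < 1) (ε C M : ℝ) {t : ℝ}
    (ht : 0 ≤ t) :
    Tendsto (fun n => ε * ∑ k ∈ Finset.range n, mittagLefflerTerm q M k t +
      C * mittagLefflerTerm q M n t) atTop (𝓝 (ε * ML q 1 (M * t ^ q))) := by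
  have hsum := summable_pow_div_Gamma hq0 hq1 (M * t ^ q)
  simp only [mittagLefflerTerm.eq_pow_div_Gamma M ht]
  unfold ML
  simpa using (hsum.hasSum.tendsto_sum_nat.const_mul ε).add (hsum.tendsto_atTop_zero.const_mul C)

theorem singular_gronwall_general (T ε M q ν : ℝ) (hM : 0 < M)
    (hq0 : 0 < q) (hq1 : q < 1) (hν : ν = 1 - q)
    (δ : ℝ → ℝ) (hδc : ContinuousOn δ (Set.Icc 0 T))
    (hineq : ∀ t ∈ Set.Icc (0:ℝ) T,
      |δ t| ≤ ε + (M / Real.Gamma q) * ∫ τ in (0:ℝ)..t, (t - τ) ^ (-ν) * |δ τ|) :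
    ∀ t ∈ Set.Icc (0:ℝ) T, |δ t| ≤ ε * ML q 1 (M * t ^ q) := by
  obtain ⟨C, hC⟩ := isCompact_Icc.exists_bound_of_continuousOn hδc
  have hrl : ∀ t ∈ Icc 0 T, |δ t| ≤ ε + M * riemannLiouville q (fun τ => |δ τ|) t := by
    intro t ht
    rw [riemannLiouville, ← mul_assoc, ← div_eq_mul_inv, show q - 1 = -ν by rw [hν]; ring]
    exact hineq t ht
  intro t ht
  exact ge_of_tendsto' (tendsto_gronwall_iterate hq0 hq1 ε C M ht.1)
    (le_gronwall_iterate hq0 hM.le hδc.abs hC hrl · t ht)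

/-- Weakly singular Gronwall inequality. -/
theorem singular_gronwall (T ε M q ν : ℝ) (hT : 0 < T) (hε : 0 < ε) (hM : 0 < M)
    (hq0 : 0 < q) (hq1 : q < 1) (hν : ν = 1 - q)
    (δ : ℝ → ℝ) (hδc : ContinuousOn δ (Set.Icc 0 T))
    (hineq : ∀ t ∈ Set.Icc (0:ℝ) T,
      |δ t| ≤ ε + (M / Real.Gamma q) * ∫ τ in (0:ℝ)..t, (t - τ) ^ (-ν) * |δ τ|) :
    ∀ t ∈ Set.Icc (0:ℝ) T, |δ t| ≤ ε * ML q 1 (M * t ^ q) :=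
  singular_gronwall_general T ε M q ν hM hq0 hq1 hν δ hδc hineq
end

section
/- Let a, d > 0 and b ∈ ℝ. Every eigenvalue μ of the boundary-value problem X'' + μX = 0 on [0,1], X(0) = 0, (aμ - b)X(1) = d X'(1) is real. -/
/-! Green's identity for `X'' + μX = 0` against `conj X`: the quantity
`W = X' conj X - X conj X'` satisfies `W' = (conj μ - μ) |X|²`, so `W(1) - W(0)` is
`(conj μ - μ) ∫₀¹ |X|²`. The condition at `0` kills `W(0)`, and the `μ`-dependent condition
at `1` gives `d W(1) = a (μ - conj μ) |X(1)|²`. Together,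
`(conj μ - μ) (d ∫₀¹ |X|² + a |X(1)|²) = 0`, and the second factor is positive because
`X ≢ 0` and `a, d > 0`. -/

open ComplexConjugate

namespace SturmLiouville

noncomputable def conjWronskian (X X' : ℝ → ℂ) (x : ℝ) : ℂ :=
  X' x * conj (X x) - X x * conj (X' x)

variable {X X' X'' : ℝ → ℂ} {μ : ℂ}

theorem hasDerivAt_conjWronskian {x : ℝ} (hX : HasDerivAt X (X' x) x)
    (hX' : HasDerivAt X' (X'' x) x) (hode : X'' x + μ * X x = 0) :
    HasDerivAt (conjWronskian X X') ((conj μ - μ) * Complex.normSq (X x)) x := by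
  have hX'' : X'' x = -μ * X x := by linear_combination hode
  refine ((hX'.mul hX.star).sub (hX.mul hX'.star)).congr_deriv ?_
  rw [hX'', ← Complex.mul_conj]
  simp only [Complex.star_def, map_mul, map_neg]
  ring

theorem conjWronskian_sub_eq_integral {s t : ℝ} (hX : ∀ x, HasDerivAt X (X' x) x)
    (hX' : ∀ x, HasDerivAt X' (X'' x) x) (hode : ∀ x ∈ Set.uIcc s t, X'' x + μ * X x = 0) :
    conjWronskian X X' t - conjWronskian X X' s
      = (conj μ - μ) * ∫ x in s..t, Complex.normSq (X x) := by
  have hXc : Continuous X := continuous_iff_continuousAt.2 fun x ↦ (hX x).continuousAt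
  have hcont : Continuous fun x ↦ (conj μ - μ) * Complex.normSq (X x) := by fun_prop
  rw [← intervalIntegral.integral_eq_sub_of_hasDerivAt
    (fun x hx ↦ hasDerivAt_conjWronskian (hX x) (hX' x) (hode x hx))
    (hcont.intervalIntegrable s t),
    intervalIntegral.integral_const_mul, intervalIntegral.integral_ofReal]

theorem ofReal_mul_conjWronskian_of_boundary {a b d t : ℝ}
    (hbc : ((a : ℂ) * μ - b) * X t = d * X' t) :
    d * conjWronskian X X' t = a * (μ - conj μ) * Complex.normSq (X t) := by
  have hbc_conj := congrArg conj hbc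
  simp only [map_mul, map_sub, Complex.conj_ofReal] at hbc_conj
  rw [conjWronskian, ← Complex.mul_conj]
  linear_combination X t * hbc_conj - conj (X t) * hbc

end SturmLiouville

open SturmLiouville

/-- For a, d > 0 (so ad > 0) and b ∈ ℝ, every eigenvalue μ of
X'' + μX = 0 on [0,1], X(0) = 0, (aμ - b)X(1) = dX'(1) is real. -/
theorem eigenvalue_real (a b d : ℝ) (ha : 0 < a) (hd : 0 < d) (μ : ℂ)
    (X X' X'' : ℝ → ℂ)
    (hX : ∀ x : ℝ, HasDerivAt X (X' x) x)
    (hX' : ∀ x : ℝ, HasDerivAt X' (X'' x) x)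
    (hode : ∀ x ∈ Set.Icc (0:ℝ) 1, X'' x + μ * X x = 0)
    (hbc0 : X 0 = 0)
    (hbc1 : ((a:ℂ) * μ - (b:ℂ)) * X 1 = (d:ℂ) * X' 1)
    (hnz : ∃ x ∈ Set.Icc (0:ℝ) 1, X x ≠ 0) :
    μ.im = 0 := by
  have hgreen := conjWronskian_sub_eq_integral hX hX' (by rwa [Set.uIcc_of_le zero_le_one])
  have hW0 : conjWronskian X X' 0 = 0 := by simp [conjWronskian, hbc0]
  have hW1 := ofReal_mul_conjWronskian_of_boundary hbc1
  set I := ∫ x in (0:ℝ)..1, Complex.normSq (X x)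
  have hI : 0 < I := by
    have hXc : Continuous X := continuous_iff_continuousAt.2 fun x ↦ (hX x).continuousAt
    obtain ⟨x₀, hx₀, hXx₀⟩ := hnz
    exact intervalIntegral.integral_pos zero_lt_one (by fun_prop)
      (fun x _ ↦ Complex.normSq_nonneg (X x)) ⟨x₀, hx₀, Complex.normSq_pos.2 hXx₀⟩
  have hfactor : (conj μ - μ) * ((d * I + a * Complex.normSq (X 1) : ℝ) : ℂ) = 0 := by
    push_cast
    linear_combination hW1 - d * hgreen - d * hW0
  have hpos : 0 < d * I + a * Complex.normSq (X 1) := by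
    have := Complex.normSq_nonneg (X 1)
    positivity
  rw [mul_eq_zero, sub_eq_zero, Complex.ofReal_eq_zero] at hfactor
  exact Complex.conj_eq_iff_im.1 (hfactor.resolve_right hpos.ne')
end

section
/- Let a, d > 0 and b ∈ ℝ with -b/d < 1. Then every eigenvalue μ of the problem X'' + μX = 0, X(0) = 0, (aμ - b)X(1) = dX'(1) is strictly positive. -/
/-!
Suppose `μ ≤ 0`. Along a solution with `X 0 = 0`, the function `X X'` has derivative
`X'² - μ X² ≥ 0`, and so does `X X' - 2 c X + c² x` up to the square `(X' - c)²`.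
Taking `c = X 1` gives `X 1 ^ 2 ≤ X 1 * X' 1`, the pointwise form of `(∫ X')² ≤ ∫ X'²`.
Multiplying the boundary condition at `1` by `X 1` then forces `X 1 = 0`, because
`a μ - b ≤ -b < d`. Finally `X X'` is monotone and vanishes at both ends, so `X²` is
antitone on `[0, 1]` and `X` vanishes identically there.
-/

open Set

lemma monotoneOn_Icc_of_hasDerivAt_nonneg {f f' : ℝ → ℝ} {a b : ℝ}
    (hf : ∀ x, HasDerivAt f (f' x) x) (hf' : ∀ x ∈ Icc a b, 0 ≤ f' x) :
    MonotoneOn f (Icc a b) :=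
  monotoneOn_of_hasDerivWithinAt_nonneg (convex_Icc a b)
    (fun x _ ↦ (hf x).continuousAt.continuousWithinAt) (fun x _ ↦ (hf x).hasDerivWithinAt)
    (fun x hx ↦ hf' x (interior_subset hx))

section NonpositiveSpectralParameter

variable {μ : ℝ} {X X' X'' : ℝ → ℝ}

lemma hasDerivAt_mul_deriv (hX : ∀ x, HasDerivAt X (X' x) x)
    (hX' : ∀ x, HasDerivAt X' (X'' x) x) (x : ℝ) :
    HasDerivAt (fun y ↦ X y * X' y) (X' x ^ 2 + X x * X'' x) x :=
  ((hX x).fun_mul (hX' x)).congr_deriv (by ring)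

lemma monotoneOn_mul_deriv (hμ : μ ≤ 0) (hX : ∀ x, HasDerivAt X (X' x) x)
    (hX' : ∀ x, HasDerivAt X' (X'' x) x) (hode : ∀ x ∈ Icc (0 : ℝ) 1, X'' x + μ * X x = 0) :
    MonotoneOn (fun y ↦ X y * X' y) (Icc 0 1) :=
  monotoneOn_Icc_of_hasDerivAt_nonneg (hasDerivAt_mul_deriv hX hX') fun x hx ↦ by
    rw [eq_neg_of_add_eq_zero_left (hode x hx)]
    nlinarith [mul_nonneg (neg_nonneg.2 hμ) (sq_nonneg (X x)), sq_nonneg (X' x)]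

lemma sq_le_mul_deriv_one (hμ : μ ≤ 0) (hX : ∀ x, HasDerivAt X (X' x) x)
    (hX' : ∀ x, HasDerivAt X' (X'' x) x) (hode : ∀ x ∈ Icc (0 : ℝ) 1, X'' x + μ * X x = 0)
    (hX0 : X 0 = 0) :
    X 1 ^ 2 ≤ X 1 * X' 1 := by
  set c := X 1
  have hderiv (x : ℝ) : HasDerivAt (fun y ↦ X y * X' y - 2 * c * X y + c ^ 2 * y)
      ((X' x - c) ^ 2 + X x * X'' x) x :=
    (((hasDerivAt_mul_deriv hX hX' x).sub ((hX x).const_mul (2 * c))).add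
      ((hasDerivAt_id x).const_mul (c ^ 2))).congr_deriv (by ring)
  have hmono := monotoneOn_Icc_of_hasDerivAt_nonneg hderiv fun x hx ↦ by
    rw [eq_neg_of_add_eq_zero_left (hode x hx)]
    nlinarith [mul_nonneg (neg_nonneg.2 hμ) (sq_nonneg (X x)), sq_nonneg (X' x - c)]
  have := hmono (left_mem_Icc.2 zero_le_one) (right_mem_Icc.2 zero_le_one) zero_le_one
  simp only [hX0] at this
  linarith

lemma eqOn_zero_of_mul_deriv_one_eq_zero (hμ : μ ≤ 0) (hX : ∀ x, HasDerivAt X (X' x) x)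
    (hX' : ∀ x, HasDerivAt X' (X'' x) x) (hode : ∀ x ∈ Icc (0 : ℝ) 1, X'' x + μ * X x = 0)
    (hX0 : X 0 = 0) (h1 : X 1 * X' 1 = 0) :
    EqOn X 0 (Icc 0 1) := by
  have hF (x : ℝ) (hx : x ∈ Icc (0 : ℝ) 1) : X x * X' x ≤ 0 :=
    h1 ▸ monotoneOn_mul_deriv hμ hX hX' hode hx (right_mem_Icc.2 zero_le_one) hx.2
  have hneg_sq_mono : MonotoneOn (fun y ↦ -X y ^ 2) (Icc 0 1) :=
    monotoneOn_Icc_of_hasDerivAt_nonneg (f' := fun x ↦ -(2 * X x * X' x))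
      (fun x ↦ by simpa using ((hX x).fun_pow 2).fun_neg) fun x hx ↦ by nlinarith [hF x hx]
  intro x hx
  have := hneg_sq_mono (left_mem_Icc.2 zero_le_one) hx hx.1
  simp only [hX0] at this
  simpa using (by nlinarith [sq_nonneg (X x)] : X x ^ 2 = 0)

end NonpositiveSpectralParameter

/-- For a, d > 0 and -b/d < 1, every eigenvalue μ of
X'' + μX = 0, X(0) = 0, (aμ - b)X(1) = dX'(1) is strictly positive. -/
theorem eigenvalue_pos (a b d : ℝ) (ha : 0 < a) (hd : 0 < d) (hbd : -b / d < 1)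
    (μ : ℝ) (X X' X'' : ℝ → ℝ)
    (hX : ∀ x : ℝ, HasDerivAt X (X' x) x)
    (hX' : ∀ x : ℝ, HasDerivAt X' (X'' x) x)
    (hode : ∀ x ∈ Set.Icc (0:ℝ) 1, X'' x + μ * X x = 0)
    (hbc0 : X 0 = 0)
    (hbc1 : (a * μ - b) * X 1 = d * X' 1)
    (hnz : ∃ x ∈ Set.Icc (0:ℝ) 1, X x ≠ 0) :
    0 < μ := by
  by_contra! hμ
  have hcoef : a * μ - b < d := by
    rw [div_lt_one hd] at hbd
    nlinarith
  have hsq := sq_le_mul_deriv_one hμ hX hX' hode hbc0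
  have hX1 : X 1 = 0 := by
    have hboundary : (a * μ - b) * X 1 ^ 2 = d * (X 1 * X' 1) := by
      linear_combination X 1 * hbc1
    have hsq_nonpos : X 1 ^ 2 ≤ 0 := by
      nlinarith [mul_le_mul_of_nonneg_left hsq hd.le, sq_nonneg (X 1)]
    exact pow_eq_zero_iff two_ne_zero |>.1 (le_antisymm hsq_nonpos (sq_nonneg _))
  obtain ⟨x, hx, hXx⟩ := hnz
  exact hXx (eqOn_zero_of_mul_deriv_one_eq_zero hμ hX hX' hode hbc0 (by simp [hX1]) hx)
end

section
/- Let a, d > 0 and b ∈ ℝ with -b/d = 1 (i.e., b = -d). Then μ = 0 is an eigenvalue of the problem X'' + μX = 0, X(0) = 0, (aμ - b)X(1) = dX'(1), with eigenfunction X(x) = x, and every other eigenvalue is strictly positive. -/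
/-! If μ < 0 were an eigenvalue with eigenfunction X, multiplying X'' + μX = 0 by X and integrating
by parts gives the energy identity `∫ X'² - μ ∫ X² = X'(1) X(1)`. By the boundary condition with
b = -d, `d X'(1) X(1) = (aμ + d) X(1)² ≤ d X(1)²`, while Cauchy–Schwarz gives `X(1)² ≤ ∫ X'²`, so
`-μ d ∫ X² ≤ 0`, contradicting `∫ X² > 0`. -/

/-- `X` (with derivative `X'` and second derivative `X''`) is an eigenfunction of
the spectral problem X'' + μX = 0, X(0) = 0, (aμ - b)X(1) = dX'(1) for eigenvalue μ. -/
def IsEigenfunction (a b d μ : ℝ) (X X' X'' : ℝ → ℝ) : Prop :=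
  (∀ x : ℝ, HasDerivAt X (X' x) x) ∧ (∀ x : ℝ, HasDerivAt X' (X'' x) x) ∧
  (∀ x ∈ Set.Icc (0:ℝ) 1, X'' x + μ * X x = 0) ∧ X 0 = 0 ∧
  (a * μ - b) * X 1 = d * X' 1 ∧ ∃ x ∈ Set.Icc (0:ℝ) 1, X x ≠ 0

open Set intervalIntegral

theorem sq_sub_le_mul_integral_deriv_sq {f f' : ℝ → ℝ} {a b : ℝ} (hab : a ≤ b)
    (hf : ∀ x ∈ Icc a b, HasDerivAt f (f' x) x) (hf' : ContinuousOn f' (Icc a b)) :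
    (f b - f a) ^ 2 ≤ (b - a) * ∫ x in a..b, f' x ^ 2 := by
  set Δ := f b - f a
  have hint : IntervalIntegrable f' MeasureTheory.volume a b := hf'.intervalIntegrable_of_Icc hab
  have hint_sq : IntervalIntegrable (fun x => f' x ^ 2) MeasureTheory.volume a b :=
    (hf'.pow 2).intervalIntegrable_of_Icc hab
  have hftc : ∫ x in a..b, f' x = Δ :=
    integral_eq_sub_of_hasDerivAt (by rwa [uIcc_of_le hab]) hint
  have hexpand : ∫ x in a..b, ((b - a) * f' x - Δ) ^ 2
      = (b - a) * ((b - a) * (∫ x in a..b, f' x ^ 2) - Δ ^ 2) := by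
    have hsq : (fun x => ((b - a) * f' x - Δ) ^ 2)
        = fun x => (b - a) ^ 2 * f' x ^ 2 - 2 * (b - a) * Δ * f' x + Δ ^ 2 := by
      ext x; ring
    rw [hsq, integral_add ((hint_sq.const_mul _).sub (hint.const_mul _)) intervalIntegrable_const,
      integral_sub (hint_sq.const_mul _) (hint.const_mul _), integral_const_mul,
      integral_const_mul, hftc, integral_const, smul_eq_mul]
    ring
  have hnonneg : 0 ≤ (b - a) * ((b - a) * (∫ x in a..b, f' x ^ 2) - Δ ^ 2) :=
    hexpand ▸ integral_nonneg hab fun x _ => sq_nonneg _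
  rcases hab.lt_or_eq with hlt | rfl
  · linarith [(mul_nonneg_iff_of_pos_left (sub_pos.2 hlt)).1 hnonneg]
  · simp [Δ]

theorem integral_deriv_sq_eq_of_second_deriv_add_mul_eq_zero {X X' X'' : ℝ → ℝ} {μ a b : ℝ}
    (hX : ∀ x ∈ uIcc a b, HasDerivAt X (X' x) x) (hX' : ∀ x ∈ uIcc a b, HasDerivAt X' (X'' x) x)
    (hode : ∀ x ∈ uIcc a b, X'' x + μ * X x = 0) :
    ∫ x in a..b, X' x ^ 2 = X' b * X b - X' a * X a + μ * ∫ x in a..b, X x ^ 2 := by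
  have hX'' : EqOn X'' (fun x => -μ * X x) (uIcc a b) := fun x hx => by
    linarith [hode x hx]
  have hcont_X : ContinuousOn X (uIcc a b) := fun x hx => (hX x hx).continuousAt.continuousWithinAt
  have hcont_X' : ContinuousOn X' (uIcc a b) :=
    fun x hx => (hX' x hx).continuousAt.continuousWithinAt
  have hparts := integral_mul_deriv_eq_deriv_mul hX' hX
    ((continuousOn_const.mul hcont_X).congr hX'').intervalIntegrable hcont_X'.intervalIntegrable
  have hsubst : ∫ x in a..b, X'' x * X x = -μ * ∫ x in a..b, X x ^ 2 := by
    rw [← integral_const_mul]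
    exact integral_congr fun x hx => by rw [hX'' hx]; ring
  simp only [sq] at hparts hsubst ⊢
  linarith

theorem isEigenfunction_id_of_eq_neg {a b d : ℝ} (hb : b = -d) :
    IsEigenfunction a b d 0 (fun x => x) (fun _ => 1) (fun _ => 0) :=
  ⟨hasDerivAt_id, fun _ => hasDerivAt_const _ _, fun _ _ => by ring, rfl, by rw [hb]; ring,
    1, right_mem_Icc.2 zero_le_one, one_ne_zero⟩

theorem IsEigenfunction.nonneg_of_eq_neg {a d μ : ℝ} {X X' X'' : ℝ → ℝ} (ha : 0 ≤ a) (hd : 0 < d)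
    (h : IsEigenfunction a (-d) d μ X X' X'') : 0 ≤ μ := by
  obtain ⟨hX, hX', hode, hX0, hbc, x₀, hx₀, hXx₀⟩ := h
  by_contra! hμ
  have hcont_X : Continuous X := continuous_iff_continuousAt.2 fun x => (hX x).continuousAt
  have hcont_X' : Continuous X' := continuous_iff_continuousAt.2 fun x => (hX' x).continuousAt
  have henergy := integral_deriv_sq_eq_of_second_deriv_add_mul_eq_zero (fun x _ => hX x)
    (fun x _ => hX' x) (by rwa [uIcc_of_le zero_le_one])
  have hcs := sq_sub_le_mul_integral_deriv_sq zero_le_one (fun x _ => hX x) hcont_X'.continuousOn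
  have hpos : 0 < ∫ x in (0:ℝ)..1, X x ^ 2 :=
    integral_pos zero_lt_one (hcont_X.pow 2).continuousOn (fun _ _ => sq_nonneg _)
      ⟨x₀, hx₀, by positivity⟩
  rw [hX0] at henergy hcs
  simp only [mul_zero, sub_zero, one_mul] at henergy hcs
  have hboundary : d * (X' 1 * X 1) = (a * μ + d) * X 1 ^ 2 := by linear_combination -X 1 * hbc
  have hineq : d * X 1 ^ 2 ≤ a * μ * X 1 ^ 2 + d * X 1 ^ 2 + d * μ * ∫ x in (0:ℝ)..1, X x ^ 2 :=
    calc d * X 1 ^ 2 ≤ d * ∫ x in (0:ℝ)..1, X' x ^ 2 := mul_le_mul_of_nonneg_left hcs hd.le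
      _ = _ := by rw [henergy]; linear_combination hboundary
  have hμa : a * μ * X 1 ^ 2 ≤ 0 :=
    mul_nonpos_of_nonpos_of_nonneg (mul_nonpos_of_nonneg_of_nonpos ha hμ.le) (sq_nonneg _)
  have hμd : d * μ * ∫ x in (0:ℝ)..1, X x ^ 2 < 0 :=
    mul_neg_of_neg_of_pos (mul_neg_of_pos_of_neg hd hμ) hpos
  linarith

/-- For a, d > 0 and b = -d, μ = 0 is an eigenvalue with
eigenfunction X(x) = x, and every other eigenvalue is strictly positive. -/
theorem eigenvalue_zero_and_pos (a b d : ℝ) (ha : 0 < a) (hd : 0 < d)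
    (hb : b = -d) :
    IsEigenfunction a b d 0 (fun x => x) (fun _ => 1) (fun _ => 0) ∧
    (∀ μ : ℝ, (∃ X X' X'' : ℝ → ℝ, IsEigenfunction a b d μ X X' X'') →
      μ ≠ 0 → 0 < μ) := by
  refine ⟨isEigenfunction_id_of_eq_neg hb, ?_⟩
  rintro μ ⟨X, X', X'', hX⟩ hμ
  subst hb
  exact (hX.nonneg_of_eq_neg ha.le hd).lt_of_ne' hμ
end

section
/- Let a, d > 0, b ∈ ℝ, and let μ₁ ≠ μ₂ be two eigenvalues of the problem X'' + μX = 0, X(0)=0, (aμ-b)X(1) = dX'(1), with eigenfunctions X₁, X₂. Then ∫_0^1 X₁(x)X₂(x) dx + (a/d) X₁(1) X₂(1) = 0. -/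
/-!
The Wronskian `W = X₁' X₂ - X₁ X₂'` satisfies `W' = (μ₂ - μ₁) X₁ X₂` by the two equations, so
`(μ₂ - μ₁) ∫₀¹ X₁ X₂ = W 1 - W 0`. The condition at `0` kills `W 0`, and the eigenparameter-dependent
condition at `1` turns `d W 1` into `a (μ₁ - μ₂) X₁ 1 X₂ 1`; dividing by `μ₂ - μ₁ ≠ 0` gives the claim.
-/

open Set

section Wronskian

variable {u u' u'' v v' v'' : ℝ → ℝ}

theorem hasDerivAt_wronskian {x : ℝ} (hu : HasDerivAt u (u' x) x) (hu' : HasDerivAt u' (u'' x) x)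
    (hv : HasDerivAt v (v' x) x) (hv' : HasDerivAt v' (v'' x) x) :
    HasDerivAt (fun y => u' y * v y - u y * v' y) (u'' x * v x - u x * v'' x) x :=
  ((hu'.mul hv).sub (hu.mul hv')).congr_deriv (by ring)

theorem sub_mul_integral_mul_eq_wronskian_sub {s t μ ν : ℝ}
    (hu : ∀ x ∈ uIcc s t, HasDerivAt u (u' x) x) (hu' : ∀ x ∈ uIcc s t, HasDerivAt u' (u'' x) x)
    (hv : ∀ x ∈ uIcc s t, HasDerivAt v (v' x) x) (hv' : ∀ x ∈ uIcc s t, HasDerivAt v' (v'' x) x)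
    (hode_u : ∀ x ∈ uIcc s t, u'' x + μ * u x = 0)
    (hode_v : ∀ x ∈ uIcc s t, v'' x + ν * v x = 0) :
    (ν - μ) * ∫ x in s..t, u x * v x =
      (u' t * v t - u t * v' t) - (u' s * v s - u s * v' s) := by
  have hderiv : ∀ x ∈ uIcc s t,
      HasDerivAt (fun y => u' y * v y - u y * v' y) ((ν - μ) * (u x * v x)) x := fun x hx =>
    (hasDerivAt_wronskian (hu x hx) (hu' x hx) (hv x hx) (hv' x hx)).congr_deriv <| by
      linear_combination v x * hode_u x hx - u x * hode_v x hx
  have hcont : ContinuousOn (fun x => (ν - μ) * (u x * v x)) (uIcc s t) := fun x hx =>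
    (continuousAt_const.mul ((hu x hx).continuousAt.mul (hv x hx).continuousAt)).continuousWithinAt
  rw [← intervalIntegral.integral_const_mul]
  exact intervalIntegral.integral_eq_sub_of_hasDerivAt hderiv hcont.intervalIntegrable

end Wronskian

theorem eigenfunctions_orthogonal_general (a b d : ℝ) (hd : 0 < d)
    (μ₁ μ₂ : ℝ) (hμ : μ₁ ≠ μ₂)
    (X₁ X₁' X₁'' X₂ X₂' X₂'' : ℝ → ℝ)
    (hX₁ : ∀ x : ℝ, HasDerivAt X₁ (X₁' x) x)
    (hX₁' : ∀ x : ℝ, HasDerivAt X₁' (X₁'' x) x)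
    (hX₂ : ∀ x : ℝ, HasDerivAt X₂ (X₂' x) x)
    (hX₂' : ∀ x : ℝ, HasDerivAt X₂' (X₂'' x) x)
    (hode₁ : ∀ x ∈ Set.Icc (0:ℝ) 1, X₁'' x + μ₁ * X₁ x = 0)
    (hode₂ : ∀ x ∈ Set.Icc (0:ℝ) 1, X₂'' x + μ₂ * X₂ x = 0)
    (hbc0₁ : X₁ 0 = 0) (hbc0₂ : X₂ 0 = 0)
    (hbc1₁ : (a * μ₁ - b) * X₁ 1 = d * X₁' 1)
    (hbc1₂ : (a * μ₂ - b) * X₂ 1 = d * X₂' 1) :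
    (∫ x in (0:ℝ)..1, X₁ x * X₂ x) + (a / d) * X₁ 1 * X₂ 1 = 0 := by
  have hIcc : uIcc (0:ℝ) 1 = Icc 0 1 := uIcc_of_le zero_le_one
  have hlagrange := sub_mul_integral_mul_eq_wronskian_sub (fun x _ => hX₁ x) (fun x _ => hX₁' x)
    (fun x _ => hX₂ x) (fun x _ => hX₂' x) (hIcc ▸ hode₁) (hIcc ▸ hode₂)
  rw [hbc0₁, hbc0₂] at hlagrange
  have hprod : (μ₂ - μ₁) * (d * (∫ x in (0:ℝ)..1, X₁ x * X₂ x) + a * X₁ 1 * X₂ 1) = 0 := by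
    linear_combination d * hlagrange - X₂ 1 * hbc1₁ + X₁ 1 * hbc1₂
  have hsum := (mul_eq_zero.1 hprod).resolve_left (sub_ne_zero.2 hμ.symm)
  field_simp
  linear_combination hsum

/-- Eigenfunctions for distinct eigenvalues of the spectral problem
X'' + μX = 0, X(0)=0, (aμ-b)X(1) = dX'(1) are orthogonal with respect to the
modified inner product ⟨f,g⟩ = ∫_0^1 f g dx + (a/d) f(1) g(1). -/
theorem eigenfunctions_orthogonal (a b d : ℝ) (ha : 0 < a) (hd : 0 < d)
    (μ₁ μ₂ : ℝ) (hμ : μ₁ ≠ μ₂)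
    (X₁ X₁' X₁'' X₂ X₂' X₂'' : ℝ → ℝ)
    (hX₁ : ∀ x : ℝ, HasDerivAt X₁ (X₁' x) x)
    (hX₁' : ∀ x : ℝ, HasDerivAt X₁' (X₁'' x) x)
    (hX₂ : ∀ x : ℝ, HasDerivAt X₂ (X₂' x) x)
    (hX₂' : ∀ x : ℝ, HasDerivAt X₂' (X₂'' x) x)
    (hode₁ : ∀ x ∈ Set.Icc (0:ℝ) 1, X₁'' x + μ₁ * X₁ x = 0)
    (hode₂ : ∀ x ∈ Set.Icc (0:ℝ) 1, X₂'' x + μ₂ * X₂ x = 0)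
    (hbc0₁ : X₁ 0 = 0) (hbc0₂ : X₂ 0 = 0)
    (hbc1₁ : (a * μ₁ - b) * X₁ 1 = d * X₁' 1)
    (hbc1₂ : (a * μ₂ - b) * X₂ 1 = d * X₂' 1)
    (hnz₁ : ∃ x ∈ Set.Icc (0:ℝ) 1, X₁ x ≠ 0)
    (hnz₂ : ∃ x ∈ Set.Icc (0:ℝ) 1, X₂ x ≠ 0) :
    (∫ x in (0:ℝ)..1, X₁ x * X₂ x) + (a / d) * X₁ 1 * X₂ 1 = 0 :=
  eigenfunctions_orthogonal_general a b d hd μ₁ μ₂ hμ X₁ X₁' X₁'' X₂ X₂' X₂'' hX₁ hX₁' hX₂ hX₂'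
    hode₁ hode₂ hbc0₁ hbc0₂ hbc1₁ hbc1₂
end
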